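/- Let λ be the uniform (normalized Lebesgue) probability measure on [0, 2π]. Then the concept class 𝒮 = {C_w : w ∈ ℝ}, where C_w = {x ∈ ℝ : cos(wx) ≥ 0}, is not totally bounded in L¹(λ), and 𝒮 is not PAC learnable under λ: there exist no natural number m and learning rule L with sample size m that is PAC for 𝒮 under λ to accuracy 1/5 with confidence 3/4. -/

import Mathlib

open MeasureTheory Filter

/-- The `n`-fold product (i.i.d.) measure on `Fin n → Ω`. -/
noncomputable def prodMeas {Ω : Type*} [MeasurableSpace Ω] (μ : Measure Ω) (n : ℕ) :
    Measure (Fin n → Ω) := Measure.pi fun _ => μ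

/-- The sample `x` labeled by the concept `C`. -/
noncomputable def labeled {Ω : Type*} (C : Set Ω) {m : ℕ} (x : Fin m → Ω) :
    Fin m → Ω × Bool := fun i => (x i, @decide (x i ∈ C) (Classical.propDecidable _))

/-- `L` is PAC for `𝒞` under `μ` to accuracy `ε` with confidence `1 - δ`. -/
def IsPAC {Ω : Type*} [MeasurableSpace Ω] (μ : Measure Ω) (𝒞 : Set (Set Ω)) (m : ℕ)
    (L : (Fin m → Ω × Bool) → Set Ω) (ε δ : ℝ) : Prop :=
  ∀ C ∈ 𝒞, prodMeas μ m
    {x | ε < (μ (symmDiff (L (labeled C x)) C)).toReal} ≤ ENNReal.ofReal δ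

/-- The concept class realized by Sontag's network: `C_w = {x | cos (w x) ≥ 0}`. -/
def sontag : Set (Set ℝ) := {C | ∃ w : ℝ, C = {x : ℝ | 0 ≤ Real.cos (w * x)}}

/-- The uniform (normalized Lebesgue) probability measure on `[0, 2π]`. -/
noncomputable def unifTwoPi : Measure ℝ :=
  (ENNReal.ofReal (2 * Real.pi))⁻¹ • (volume.restrict (Set.Icc (0 : ℝ) (2 * Real.pi)))

/-!
The concepts `C_{4^i}` are pairwise at `λ`-distance `1/2`. Indeed, for `a > 0` and `b = 4qa`, the
set `C_a` is, up to endpoints, the whole of `[0, π/(2a)]` and of `[3π/(2a), 2π/a)` and misses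
`(π/(2a), 3π/(2a))`; these endpoints are multiples of the period `2π/b` of `C_b`, so `C_b`
bisects each piece, hence `C_a Δ C_b` bisects a period of `C_a`, and then `[0, 2π)` by
periodicity.

So no set is `1/5`-close to two of these concepts, and infinitely many of them admit no finite
`1/5`-net. For learning, take `2^(m+1)` of them: a sample of size `m` has at most `2^m` labelings,
and the learner's output on a labeling is `1/5`-close to at most one concept, so at every sample at
least `2^m` concepts fail; averaging over samples, some concept fails with probability `≥ 1/2`.
-/

open Real Set Function
open scoped ENNReal Finset

section Bisects

variable {α : Type*} [MeasurableSpace α] {μ : Measure α} {s t I J : Set α}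

def Bisects (μ : Measure α) (s I : Set α) : Prop := μ (s ∩ I) = μ I / 2

lemma Bisects.congr_ae (h : Bisects μ s I) (hIJ : I =ᵐ[μ] J) : Bisects μ s J := by
  rw [Bisects, ← measure_congr hIJ, ← measure_congr ((ae_eq_refl s).inter hIJ)]
  exact h

lemma Bisects.union (hs : MeasurableSet s) (hI : Bisects μ s I) (hJ : Bisects μ s J)
    (hd : Disjoint I J) (hJm : MeasurableSet J) : Bisects μ s (I ∪ J) := by
  rw [Bisects, inter_union_distrib_left, measure_union (hd.mono inter_subset_right
    inter_subset_right) (hs.inter hJm), hI, hJ, measure_union hd hJm, ENNReal.add_div]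

lemma Bisects.symmDiff_of_disjoint (h : Bisects μ s I) (hI : Disjoint t I) :
    Bisects μ (symmDiff t s) I := by
  have : symmDiff t s ∩ I = s ∩ I := by
    ext x
    have := hI.notMem_of_mem_right (a := x)
    simp only [mem_inter_iff, mem_symmDiff]
    tauto
  rw [Bisects, this, h]

lemma Bisects.symmDiff_of_subset (hs : MeasurableSet s) (h : Bisects μ s I) (hI : I ⊆ t)
    (hfin : μ I ≠ ∞) : Bisects μ (symmDiff t s) I := by
  have : symmDiff t s ∩ I = I \ s := by
    ext x
    have := @hI x
    simp only [mem_inter_iff, mem_symmDiff, Set.mem_sdiff]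
    tauto
  have hsplit := measure_inter_add_sdiff (μ := μ) I hs
  rw [inter_comm, h] at hsplit
  rw [Bisects, this, ← ENNReal.sub_eq_of_eq_add_rev (ENNReal.div_ne_top hfin two_ne_zero)
    hsplit.symm, ENNReal.sub_half hfin]

end Bisects

section Periodic

variable {s t : Set ℝ} {c T : ℝ}

lemma volume_inter_Ico_add_of_periodic (hs : Periodic (· ∈ s) c) (a b : ℝ) :
    volume (s ∩ Ico (a + c) (b + c)) = volume (s ∩ Ico a b) := by
  have : s ∩ Ico a b = (· + c) ⁻¹' (s ∩ Ico (a + c) (b + c)) := by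
    ext x
    simp only [mem_inter_iff, mem_preimage, mem_Ico, add_le_add_iff_right,
      add_lt_add_iff_right, show (x + c ∈ s) = (x ∈ s) from hs x]
  rw [this, measure_preimage_add_right]

lemma Bisects.Ico_add_of_periodic (hper : Periodic (· ∈ s) c) {a b : ℝ}
    (h : Bisects volume s (Ico a b)) : Bisects volume s (Ico (a + c) (b + c)) := by
  rw [Bisects, volume_inter_Ico_add_of_periodic hper, h, Real.volume_Ico, Real.volume_Ico,
    add_sub_add_right_eq_sub]

lemma Bisects.Ico_nat_mul_of_periodic (hs : MeasurableSet s) (hper : Periodic (· ∈ s) T)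
    (hT : 0 ≤ T) (h : Bisects volume s (Ico 0 T)) {j k : ℕ} (hjk : j ≤ k) :
    Bisects volume s (Ico (j * T) (k * T)) := by
  induction k, hjk using Nat.le_induction with
  | base => simp [Bisects]
  | succ k hjk ih =>
    have hstep : Bisects volume s (Ico (k * T) ((k + 1 : ℕ) * T)) := by
      simpa [add_mul, add_comm] using h.Ico_add_of_periodic (hper.nat_mul k)
    rw [← Ico_union_Ico_eq_Ico (b := k * T) (by gcongr) (by gcongr; omega)]
    exact ih.union hs hstep Ico_disjoint_Ico_same measurableSet_Ico

lemma Function.Periodic.mem_symmDiff (hs : Periodic (· ∈ s) c)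
    (ht : Periodic (· ∈ t) c) : Periodic (· ∈ symmDiff s t) c := fun x => by
  simp only [Set.mem_symmDiff, (hs x : (x + c ∈ s) = (x ∈ s)),
    (ht x : (x + c ∈ t) = (x ∈ t))]

end Periodic

open Classical in
lemma natCast_le_sum_measure_add {α ι : Type*} [MeasurableSpace α] {ν : Measure α}
    [IsProbabilityMeasure ν] [Fintype ι] (B : ι → Set α) {N n : ℕ}
    (h : ∀ x, N ≤ #{i | x ∈ B i} + n) : (N : ℝ≥0∞) ≤ ∑ i, ν (B i) + n := by
  set B' := fun i => toMeasurable ν (B i)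
  have hcount : ∀ x, (N : ℝ≥0∞) ≤ ∑ i, (B' i).indicator 1 x + n := fun x => by
    have hsub : #{i | x ∈ B i} ≤ #{i | x ∈ B' i} :=
      Finset.card_le_card <| Finset.monotone_filter_right _ fun i _ hi =>
        subset_toMeasurable ν (B i) hi
    simp only [indicator_apply, Pi.one_apply, Finset.sum_boole]
    exact_mod_cast (h x).trans (by omega)
  calc (N : ℝ≥0∞) = ∫⁻ _, (N : ℝ≥0∞) ∂ν := by simp
    _ ≤ ∫⁻ x, (∑ i, (B' i).indicator 1 x + n) ∂ν := lintegral_mono hcount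
    _ = ∑ i, ν (B i) + n := by
      rw [lintegral_add_right _ measurable_const, lintegral_finsetSum _ fun i _ =>
        measurable_one.indicator (measurableSet_toMeasurable ν (B i))]
      simp [lintegral_indicator_one (measurableSet_toMeasurable ν _)]

instance {Ω : Type*} [MeasurableSpace Ω] (μ : Measure Ω) [IsProbabilityMeasure μ] (n : ℕ) :
    IsProbabilityMeasure (prodMeas μ n) := by
  unfold prodMeas
  infer_instance

section Separated

variable {Ω ι : Type*} [MeasurableSpace Ω] {μ : Measure Ω} {c : ι → Set Ω} {r : ℝ≥0∞}

lemma eq_of_measure_symmDiff_le_of_pairwise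
    (hc : Pairwise fun i j => 2 * r < μ (symmDiff (c i) (c j))) {A : Set Ω} {i j : ι}
    (hi : μ (symmDiff A (c i)) ≤ r) (hj : μ (symmDiff A (c j)) ≤ r) : i = j := by
  by_contra hij
  refine (hc hij).not_ge ?_
  calc μ (symmDiff (c i) (c j))
      ≤ μ (symmDiff (c i) A) + μ (symmDiff A (c j)) := measure_symmDiff_le _ _ _
    _ ≤ 2 * r := by rw [symmDiff_comm, two_mul]; gcongr

lemma exists_forall_lt_measure_symmDiff_of_pairwise [Infinite ι]
    (hc : Pairwise fun i j => 2 * r < μ (symmDiff (c i) (c j))) (𝒟 : Finset (Set Ω)) :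
    ∃ i, ∀ D ∈ 𝒟, r < μ (symmDiff (c i) D) := by
  by_contra! h
  choose f hf𝒟 hf using h
  obtain ⟨i, j, hij, hfij⟩ :=
    Finite.exists_ne_map_eq_of_infinite fun i => (⟨f i, hf𝒟 i⟩ : 𝒟)
  simp only [Subtype.mk.injEq] at hfij
  refine hij (eq_of_measure_symmDiff_le_of_pairwise hc (A := f i) ?_ ?_)
  · rw [symmDiff_comm]; exact hf i
  · rw [symmDiff_comm, hfij]; exact hf j

lemma card_filter_measure_symmDiff_le_of_pairwise [Fintype ι]
    (hc : Pairwise fun i j => 2 * r < μ (symmDiff (c i) (c j))) {m : ℕ}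
    (L : (Fin m → Ω × Bool) → Set Ω) (x : Fin m → Ω) :
    #{i | μ (symmDiff (L (labeled (c i) x)) (c i)) ≤ r} ≤ 2 ^ m := by
  classical
  calc #{i | μ (symmDiff (L (labeled (c i) x)) (c i)) ≤ r}
      ≤ (Finset.univ : Finset (Fin m → Bool)).card := by
        refine Finset.card_le_card_of_injOn (fun i k => (labeled (c i) x k).2)
          (fun _ _ => Finset.mem_coe.2 (Finset.mem_univ _)) fun i hi j hj hij => ?_
        have hlab : labeled (c i) x = labeled (c j) x :=
          funext fun k => Prod.ext rfl (congrFun hij k)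
        simp only [Finset.coe_filter, Finset.mem_univ, true_and, Set.mem_ofPred_eq] at hi hj
        exact eq_of_measure_symmDiff_le_of_pairwise hc hi (hlab ▸ hj)
    _ = 2 ^ m := by simp

lemma not_isPAC_of_pairwise [IsProbabilityMeasure μ] [Fintype ι] {𝒞 : Set (Set Ω)}
    {ε δ : ℝ}
    (hc : Pairwise fun i j => 2 * ENNReal.ofReal ε < μ (symmDiff (c i) (c j)))
    (h𝒞 : ∀ i, c i ∈ 𝒞) {m : ℕ}
    (hK : 2 ^ m + Fintype.card ι * ENNReal.ofReal δ < Fintype.card ι)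
    (L : (Fin m → Ω × Bool) → Set Ω) : ¬ IsPAC μ 𝒞 m L ε δ := by
  classical
  intro hL
  set bad := fun i => {x | ε < (μ (symmDiff (L (labeled (c i) x)) (c i))).toReal}
  have hcount : ∀ x, Fintype.card ι ≤ #{i | x ∈ bad i} + 2 ^ m := fun x => by
    have hgood : #{i | x ∉ bad i} ≤ 2 ^ m := by
      refine (Finset.card_le_card (Finset.monotone_filter_right _ fun i _ hi => ?_)).trans
        (card_filter_measure_symmDiff_le_of_pairwise hc L x)
      exact (ENNReal.ofReal_toReal (measure_ne_top μ _)).symm.trans_le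
        (ENNReal.ofReal_le_ofReal (not_lt.1 hi))
    rw [← Finset.card_univ, ← Finset.card_filter_add_card_filter_not (fun i => x ∈ bad i)]
    omega
  have hsum := natCast_le_sum_measure_add (ν := prodMeas μ m) bad hcount
  have hδ : ∑ i, prodMeas μ m (bad i) ≤ Fintype.card ι * ENNReal.ofReal δ := by
    calc ∑ i, prodMeas μ m (bad i) ≤ ∑ _i : ι, ENNReal.ofReal δ :=
          Finset.sum_le_sum fun i _ => hL (c i) (h𝒞 i)
      _ = Fintype.card ι * ENNReal.ofReal δ := by simp
  rw [add_comm] at hK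
  exact (hsum.trans (add_le_add_left hδ _)).not_gt (by exact_mod_cast hK)

end Separated

def sontagConcept (w : ℝ) : Set ℝ := {x | 0 ≤ cos (w * x)}

lemma sontagConcept_mem_sontag (w : ℝ) : sontagConcept w ∈ sontag := ⟨w, rfl⟩

lemma measurableSet_sontagConcept (w : ℝ) : MeasurableSet (sontagConcept w) :=
  measurableSet_le measurable_const (by fun_prop)

lemma periodic_mem_sontagConcept (w : ℝ) : Periodic (· ∈ sontagConcept w) (2 * π / w) := by
  rw [div_eq_inv_mul]
  exact (cos_periodic.comp (0 ≤ ·)).const_mul w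

lemma cos_nonneg_inter_Ico :
    {y | 0 ≤ cos y} ∩ Ico 0 (2 * π) = Ico 0 (2 * π) \ Ioo (π / 2) (3 * π / 2) := by
  ext y
  simp only [mem_inter_iff, Set.mem_ofPred_eq, Set.mem_sdiff, and_comm (a := 0 ≤ cos y)]
  refine and_congr_right fun hy => ⟨?_, fun h => ?_⟩
  · rintro h ⟨h1, h2⟩
    linarith [cos_neg_of_pi_div_two_lt_of_lt h1 (by linarith)]
  · simp only [mem_Ioo, not_and_or, not_lt] at h
    rcases h with h | h
    · exact cos_nonneg_of_mem_Icc ⟨by linarith [hy.1, pi_pos], h⟩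
    · rw [← cos_sub_two_pi]
      exact cos_nonneg_of_mem_Icc ⟨by linarith, by linarith [hy.2, pi_pos]⟩

lemma sontagConcept_inter_Ico_period {w : ℝ} (hw : 0 < w) :
    sontagConcept w ∩ Ico 0 (2 * π / w) =
      Ico 0 (2 * π / w) \ Ioo (π / 2 / w) (3 * π / 2 / w) := by
  rw [← zero_div w, ← preimage_const_mul_Ico₀ _ _ hw, ← preimage_const_mul_Ioo₀ _ _ hw]
  exact congrArg (preimage (w * ·)) cos_nonneg_inter_Ico

lemma Ioo_subset_Ico_period {w : ℝ} (hw : 0 < w) :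
    Ioo (π / 2 / w) (3 * π / 2 / w) ⊆ Ico 0 (2 * π / w) :=
  Ioo_subset_Ico_self.trans (Ico_subset_Ico (by positivity) (by gcongr; linarith [pi_pos]))

lemma disjoint_sontagConcept_Ioo {w : ℝ} (hw : 0 < w) :
    Disjoint (sontagConcept w) (Ioo (π / 2 / w) (3 * π / 2 / w)) :=
  Set.disjoint_left.2 fun _ hx hx' =>
    ((sontagConcept_inter_Ico_period hw).subset ⟨hx, Ioo_subset_Ico_period hw hx'⟩).2 hx'

lemma subset_sontagConcept {w : ℝ} (hw : 0 < w) {I : Set ℝ} (hI : I ⊆ Ico 0 (2 * π / w))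
    (hd : Disjoint I (Ioo (π / 2 / w) (3 * π / 2 / w))) : I ⊆ sontagConcept w := fun _ hx =>
  ((sontagConcept_inter_Ico_period hw).symm.subset ⟨hI hx, hd.notMem_of_mem_left hx⟩).1

lemma bisects_sontagConcept_Ico_period {w : ℝ} (hw : 0 < w) :
    Bisects volume (sontagConcept w) (Ico 0 (2 * π / w)) := by
  rw [Bisects, sontagConcept_inter_Ico_period hw, measure_sdiff (Ioo_subset_Ico_period hw)
    measurableSet_Ioo.nullMeasurableSet measure_Ioo_lt_top.ne, Real.volume_Ico, Real.volume_Ioo,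
    ← ENNReal.ofReal_sub _ (sub_nonneg.2 (by gcongr; linarith [pi_pos])),
    ← ENNReal.ofReal_ofNat 2, ← ENNReal.ofReal_div_of_pos two_pos]
  congr 1
  ring

lemma bisects_sontagConcept_Ico_nat_mul {w : ℝ} (hw : 0 < w) {j k : ℕ} (hjk : j ≤ k) :
    Bisects volume (sontagConcept w) (Ico (j * (2 * π / w)) (k * (2 * π / w))) :=
  (bisects_sontagConcept_Ico_period hw).Ico_nat_mul_of_periodic (measurableSet_sontagConcept w)
    (periodic_mem_sontagConcept w) (by positivity) hjk

lemma bisects_sontagConcept_Ico_quarter_period {a : ℝ} (ha : 0 < a) {q j k : ℕ} (hq : 0 < q)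
    (hjk : j ≤ k) :
    Bisects volume (sontagConcept (4 * q * a)) (Ico (j * (π / 2 / a)) (k * (π / 2 / a))) := by
  convert bisects_sontagConcept_Ico_nat_mul (w := 4 * q * a) (by positivity)
    (Nat.mul_le_mul_right q hjk) using 2 <;> push_cast <;> field_simp <;> ring

lemma bisects_symmDiff_sontagConcept {a : ℝ} (ha : 0 < a) {q : ℕ} (hq : 0 < q) :
    Bisects volume (symmDiff (sontagConcept a) (sontagConcept (4 * q * a)))
      (Ico 0 (2 * π / a)) := by
  have hpi := pi_pos
  have hP : Bisects volume (sontagConcept (4 * q * a)) (Icc 0 (π / 2 / a)) := by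
    refine Bisects.congr_ae ?_ Ico_ae_eq_Icc
    simpa using bisects_sontagConcept_Ico_quarter_period ha hq zero_le_one
  have hM : Bisects volume (sontagConcept (4 * q * a)) (Ioo (π / 2 / a) (3 * π / 2 / a)) := by
    have h : Bisects volume (sontagConcept (4 * q * a)) (Ico (π / 2 / a) (3 * π / 2 / a)) := by
      convert bisects_sontagConcept_Ico_quarter_period (j := 1) (k := 3) ha hq (by norm_num)
        using 2 <;> push_cast <;> ring
    exact h.congr_ae Ioo_ae_eq_Ico.symm
  have hQ : Bisects volume (sontagConcept (4 * q * a)) (Ico (3 * π / 2 / a) (2 * π / a)) := by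
    convert bisects_sontagConcept_Ico_quarter_period (j := 3) (k := 4) ha hq (by norm_num)
      using 2 <;> push_cast <;> ring
  have hmeas := measurableSet_sontagConcept (4 * q * a)
  have hD := (measurableSet_sontagConcept a).symmDiff hmeas
  have hPM : Bisects volume (symmDiff (sontagConcept a) (sontagConcept (4 * q * a)))
      (Ico 0 (3 * π / 2 / a)) := by
    rw [← Icc_union_Ioo_eq_Ico (b := π / 2 / a) (by positivity) (by gcongr; linarith)]
    refine Bisects.union hD ?_ (hM.symmDiff_of_disjoint (disjoint_sontagConcept_Ioo ha))
      (Set.disjoint_left.2 fun x hx hx' => hx'.1.not_ge hx.2) measurableSet_Ioo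
    refine hP.symmDiff_of_subset hmeas (subset_sontagConcept ha ?_ ?_) measure_Icc_lt_top.ne
    · exact Icc_subset_Ico_right (by gcongr; linarith)
    · exact Set.disjoint_left.2 fun x hx hx' => hx'.1.not_ge hx.2
  rw [← Ico_union_Ico_eq_Ico (b := 3 * π / 2 / a) (by positivity) (by gcongr; linarith)]
  refine hPM.union hD ?_ Ico_disjoint_Ico_same measurableSet_Ico
  refine hQ.symmDiff_of_subset hmeas (subset_sontagConcept ha ?_ ?_) measure_Ico_lt_top.ne
  · exact Ico_subset_Ico_left (by positivity)
  · exact Set.disjoint_left.2 fun x hx hx' => hx'.2.not_ge hx.1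

instance : IsProbabilityMeasure unifTwoPi := by
  constructor
  rw [unifTwoPi, Measure.smul_apply, Measure.restrict_apply_univ, Real.volume_Icc, sub_zero,
    smul_eq_mul, ENNReal.inv_mul_cancel (by simp [pi_pos]) ENNReal.ofReal_ne_top]

lemma Bisects.unifTwoPi_eq {s : Set ℝ} (h : Bisects volume s (Ico 0 (2 * π))) :
    unifTwoPi s = 2⁻¹ := by
  rw [unifTwoPi, Measure.smul_apply, Measure.restrict_apply' measurableSet_Icc, smul_eq_mul,
    ← measure_congr ((ae_eq_refl s).inter Ico_ae_eq_Icc), h, Real.volume_Ico, sub_zero,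
    ← mul_div_assoc, ENNReal.inv_mul_cancel (by simp [pi_pos]) ENNReal.ofReal_ne_top, one_div]

lemma unifTwoPi_symmDiff_sontagConcept {k q : ℕ} (hk : 0 < k) (hq : 0 < q) :
    unifTwoPi (symmDiff (sontagConcept k) (sontagConcept (4 * q * k))) = 2⁻¹ := by
  have hk' : (0 : ℝ) < k := Nat.cast_pos.2 hk
  have hper :
      Periodic (· ∈ symmDiff (sontagConcept k) (sontagConcept (4 * q * k))) (2 * π / k) := by
    have hT : ((4 * q : ℕ) : ℝ) * (2 * π / (4 * q * k)) = 2 * π / k := by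
      push_cast
      field_simp
    have hb := (periodic_mem_sontagConcept (4 * q * k)).nat_mul (4 * q)
    rw [hT] at hb
    exact (periodic_mem_sontagConcept _).mem_symmDiff hb
  have h := (bisects_symmDiff_sontagConcept hk' hq).Ico_nat_mul_of_periodic
    ((measurableSet_sontagConcept _).symmDiff (measurableSet_sontagConcept _)) hper
    (by positivity) (Nat.zero_le k)
  rw [Nat.cast_zero, zero_mul, mul_div_cancel₀ _ hk'.ne'] at h
  exact h.unifTwoPi_eq

lemma unifTwoPi_symmDiff_sontagConcept_four_pow {i j : ℕ} (hij : i ≠ j) :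
    unifTwoPi (symmDiff (sontagConcept (4 ^ i)) (sontagConcept (4 ^ j))) = 2⁻¹ := by
  wlog h : i < j generalizing i j
  · rw [symmDiff_comm]
    exact this hij.symm (hij.symm.lt_of_le (not_lt.1 h))
  have h4 : ((4 : ℝ) ^ j) = 4 * ((4 ^ (j - i - 1) : ℕ) : ℝ) * ((4 ^ i : ℕ) : ℝ) := by
    push_cast
    rw [← pow_succ', ← pow_add]
    congr 1
    omega
  have := unifTwoPi_symmDiff_sontagConcept (k := 4 ^ i) (q := 4 ^ (j - i - 1))
    (by positivity) (by positivity)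
  rw [← h4] at this
  exact_mod_cast this

/-- under the uniform distribution `λ` on `[0, 2π]`, Sontag's concept
class is not totally bounded in `L¹(λ)` and is not PAC learnable: no learning rule of any
sample size is PAC to accuracy `1/5` with confidence `3/4`. -/
theorem stmt10 :
    (¬ ∀ ε : ℝ, 0 < ε → ∃ 𝒟 : Finset (Set ℝ), ∀ C ∈ sontag, ∃ D ∈ 𝒟,
        unifTwoPi (symmDiff C D) ≤ ENNReal.ofReal ε) ∧
    ¬ ∃ (m : ℕ) (L : (Fin m → ℝ × Bool) → Set ℝ),
        (∀ s, MeasurableSet (L s)) ∧ IsPAC unifTwoPi sontag m L (1 / 5) (1 / 4) := by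
  have hsep : Pairwise fun i j : ℕ => 2 * ENNReal.ofReal (1 / 5) <
      unifTwoPi (symmDiff (sontagConcept (4 ^ i)) (sontagConcept (4 ^ j))) := fun i j hij => by
    dsimp only
    rw [unifTwoPi_symmDiff_sontagConcept_four_pow hij, ← ENNReal.ofReal_ofNat 2,
      ← ENNReal.ofReal_mul zero_le_two, ← ENNReal.ofReal_inv_of_pos two_pos,
      ENNReal.ofReal_lt_ofReal_iff (by norm_num)]
    norm_num
  refine ⟨fun h => ?_, ?_⟩
  · obtain ⟨𝒟, h𝒟⟩ := h (1 / 5) (by norm_num)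
    obtain ⟨i, hi⟩ := exists_forall_lt_measure_symmDiff_of_pairwise hsep 𝒟
    obtain ⟨D, hD, hle⟩ := h𝒟 _ (sontagConcept_mem_sontag _)
    exact (hi D hD).not_ge hle
  · rintro ⟨m, L, -, hL⟩
    have hK : (1 : ℝ≥0∞) + 2 * ENNReal.ofReal (1 / 4) < 2 := by
      rw [← ENNReal.ofReal_one, ← ENNReal.ofReal_ofNat 2, ← ENNReal.ofReal_mul zero_le_two,
        ← ENNReal.ofReal_add zero_le_one (by norm_num),
        ENNReal.ofReal_lt_ofReal_iff (by norm_num)]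
      norm_num
    refine not_isPAC_of_pairwise (ι := Fin (2 ^ (m + 1)))
      (hsep.comp_of_injective Fin.val_injective) (fun _ => sontagConcept_mem_sontag _) ?_ L hL
    rw [Fintype.card_fin]
    push_cast
    calc (2 : ℝ≥0∞) ^ m + 2 ^ (m + 1) * ENNReal.ofReal (1 / 4)
        = (1 + 2 * ENNReal.ofReal (1 / 4)) * 2 ^ m := by ring
      _ < 2 * 2 ^ m := ENNReal.mul_lt_mul_left (by simp) (by simp) hK
      _ = 2 ^ (m + 1) := (pow_succ' _ _).symm
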